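/- Let X be a nonempty complete metric space that is locally connected, let J be an interval in ℝ, and let N be a finite or countable index set. For each n ∈ N let G_n be a G_δ-subset of J and let f_n : X → J be a continuous function that is nowhere locally constant. Then ⋂_{n∈N} f_n⁻¹(G_n) is a G_δ-subset of X. -/

import Mathlib

/-- A `G_δ`-subset of a topological space: a countable intersection of dense
open subsets. -/
def IsGdeltaDense {X : Type*} [TopologicalSpace X] (s : Set X) : Prop :=
  ∃ T : Set (Set X), T.Countable ∧ (∀ t ∈ T, IsOpen t ∧ Dense t) ∧ s = ⋂₀ T

/-- A function on a topological space is nowhere locally constant if its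
restriction to every nonempty connected open subset is not constant. -/
def NowhereLocallyConstant {X : Type*} [TopologicalSpace X] (f : X → ℝ) : Prop :=
  ∀ U : Set X, IsOpen U → IsConnected U → ∃ x ∈ U, ∃ y ∈ U, f x ≠ f y

/-!
The image of a nonempty open set `U` under a continuous nowhere locally constant `f`
contains an open interval: `f` is non-constant on the connected component of some point
in `U`, which is open since `X` is locally connected, and its image is an interval.
Hence `f` pulls dense sets back to dense sets, and so pulls countable intersections of
dense open sets back to countable intersections of dense open sets.
-/

open Set

section GdeltaDense

variable {X Y : Type*} [TopologicalSpace X] [TopologicalSpace Y]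

theorem IsGdeltaDense.iInter {ι : Type*} [Countable ι] {s : ι → Set X}
    (hs : ∀ i, IsGdeltaDense (s i)) : IsGdeltaDense (⋂ i, s i) := by
  choose T hTc hT hsT using hs
  refine ⟨⋃ i, T i, countable_iUnion hTc, fun t ht => ?_, ?_⟩
  · obtain ⟨i, hi⟩ := mem_iUnion.mp ht
    exact hT i t hi
  · simp only [hsT, sInter_iUnion]

theorem Dense.preimage_of_interior_image_nonempty {f : X → Y}
    (hf : ∀ U : Set X, IsOpen U → U.Nonempty → (interior (f '' U)).Nonempty)
    {D : Set Y} (hD : Dense D) : Dense (f ⁻¹' D) := by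
  refine dense_iff_inter_open.mpr fun U hU hne => ?_
  obtain ⟨_, hy, hyD⟩ := hD.inter_open_nonempty _ isOpen_interior (hf U hU hne)
  obtain ⟨x, hxU, rfl⟩ := interior_subset hy
  exact ⟨x, hxU, hyD⟩

theorem IsGdeltaDense.preimage {f : X → Y} (hc : Continuous f)
    (hf : ∀ U : Set X, IsOpen U → U.Nonempty → (interior (f '' U)).Nonempty)
    {s : Set Y} (hs : IsGdeltaDense s) : IsGdeltaDense (f ⁻¹' s) := by
  obtain ⟨T, hTc, hT, rfl⟩ := hs
  refine ⟨Set.preimage f '' T, hTc.image _, ?_, by rw [preimage_sInter, sInter_image]⟩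
  rintro _ ⟨t, ht, rfl⟩
  exact ⟨(hT t ht).1.preimage hc, (hT t ht).2.preimage_of_interior_image_nonempty hf⟩

end GdeltaDense

theorem interior_image_codRestrict_nonempty {X Y : Type*} [TopologicalSpace Y] {f : X → Y}
    {s : Set Y} (h : ∀ x, f x ∈ s) {U : Set X} (hU : (interior (f '' U)).Nonempty) :
    (interior (codRestrict f s h '' U)).Nonempty := by
  obtain ⟨y, hy⟩ := hU
  obtain ⟨x, -, rfl⟩ := interior_subset hy
  have hval : Subtype.val ⁻¹' (f '' U) = codRestrict f s h '' U := by
    ext ⟨y, hy⟩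
    simp [Subtype.ext_iff]
  exact ⟨⟨f x, h x⟩, hval ▸ preimage_interior_subset_interior_preimage continuous_subtype_val hy⟩

theorem NowhereLocallyConstant.interior_image_nonempty {X : Type*} [TopologicalSpace X]
    [LocallyConnectedSpace X] {f : X → ℝ} (hf : NowhereLocallyConstant f)
    (hc : Continuous f) {U : Set X} (hU : IsOpen U) (hne : U.Nonempty) :
    (interior (f '' U)).Nonempty := by
  obtain ⟨x, hx⟩ := hne
  set V := connectedComponentIn U x
  have hV : IsConnected V := isConnected_connectedComponentIn_iff.mpr hx
  have hfV : (f '' V).OrdConnected := (hV.isPreconnected.image f hc.continuousOn).ordConnected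
  obtain ⟨a, ha, b, hb, hab⟩ := hf V hU.connectedComponentIn hV
  obtain ⟨p, hp, q, hq, hpq⟩ : ∃ p ∈ f '' V, ∃ q ∈ f '' V, p < q := by
    rcases hab.lt_or_gt with h | h
    · exact ⟨_, mem_image_of_mem f ha, _, mem_image_of_mem f hb, h⟩
    · exact ⟨_, mem_image_of_mem f hb, _, mem_image_of_mem f ha, h⟩
  have hIoo : Ioo p q ⊆ f '' U :=
    Ioo_subset_Icc_self.trans <| (hfV.out hp hq).trans <|
      image_mono (connectedComponentIn_subset U x)
  exact (nonempty_Ioo.mpr hpq).mono (isOpen_Ioo.subset_interior_iff.mpr hIoo)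

theorem gdelta_preimage_inter_general {X : Type*} [MetricSpace X]
    [LocallyConnectedSpace X]
    (J : Set ℝ)
    (N : Type*) [Countable N]
    (G : N → Set ℝ)
    (hG : ∀ n, IsGdeltaDense ((Subtype.val ⁻¹' G n) : Set J))
    (f : N → X → ℝ) (hfJ : ∀ n x, f n x ∈ J)
    (hcont : ∀ n, Continuous (f n))
    (hnlc : ∀ n, NowhereLocallyConstant (f n)) :
    IsGdeltaDense (⋂ n, f n ⁻¹' G n) :=
  IsGdeltaDense.iInter fun n =>
    (hG n).preimage ((hcont n).codRestrict (hfJ n)) fun _ hU hne =>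
      interior_image_codRestrict_nonempty (hfJ n)
        ((hnlc n).interior_image_nonempty (hcont n) hU hne)

/-- Let `X` be a nonempty complete, locally connected metric space, `J` an
interval of `ℝ`, `N` an at most countable index set; for `n ∈ N` let `G n` be
a `G_δ`-subset of `J` and `f n : X → J` continuous and nowhere locally
constant. Then `⋂ n, f n ⁻¹' (G n)` is a `G_δ`-subset of `X`. -/
theorem gdelta_preimage_inter {X : Type*} [MetricSpace X] [CompleteSpace X]
    [Nonempty X] [LocallyConnectedSpace X]
    (J : Set ℝ) (hJ : J.OrdConnected)
    (N : Type*) [Countable N]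
    (G : N → Set ℝ) (hGJ : ∀ n, G n ⊆ J)
    (hG : ∀ n, IsGdeltaDense ((Subtype.val ⁻¹' G n) : Set J))
    (f : N → X → ℝ) (hfJ : ∀ n x, f n x ∈ J)
    (hcont : ∀ n, Continuous (f n))
    (hnlc : ∀ n, NowhereLocallyConstant (f n)) :
    IsGdeltaDense (⋂ n, f n ⁻¹' G n) :=
  gdelta_preimage_inter_general J N G hG f hfJ hcont hnlc
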